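/- Let n ≥ 2 be an integer and ν₁ ≥ ν₂ ≥ ... ≥ ν_r ≥ 0 reals with Σνᵢ² = n² − 1 and Σνᵢ = 3n − 3. Then ν₁ > (n − 1)/3. -/
import Mathlib

/-- In the setting of the Noether equalities for a plane Cremona map of degree
`n ≥ 2`, the largest multiplicity exceeds `(n - 1)/3`. -/
theorem max_multiplicity_gt (n : ℤ) (hn : 2 ≤ n) (r : ℕ)
    (ν : ℕ → ℝ) (hmono : ∀ i j, i ≤ j → ν j ≤ ν i) (hpos : ∀ i, 0 ≤ ν i)
    (hsq : ∑ i ∈ Finset.range r, (ν i) ^ 2 = (n : ℝ) ^ 2 - 1)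
    (hsum : ∑ i ∈ Finset.range r, ν i = 3 * (n : ℝ) - 3) :
    ν 0 > ((n : ℝ) - 1) / 3 := by
  have hn' : (2 : ℝ) ≤ (n : ℝ) := by exact_mod_cast hn
  have key : (n : ℝ) ^ 2 - 1 ≤ ν 0 * (3 * (n : ℝ) - 3) := by
    rw [← hsq, ← hsum, Finset.mul_sum]
    apply Finset.sum_le_sum
    intro i _
    have h1 : ν i ≤ ν 0 := hmono 0 i (Nat.zero_le i)
    have := hpos i
    nlinarith
  nlinarith
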